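/- arXiv:1406.2396 — 2 statements merged into one kernel-verified Lean document; each statement's English description precedes it below -/
import Mathlib

section
/- Let $\mathfrak{g}$ be a finite-dimensional complex Lie algebra equipped with a real inner product $\langle\cdot,\cdot\rangle$ that is Hermitian, i.e., $\langle ix, iy\rangle = \langle x, y\rangle$ for all $x, y \in \mathfrak{g}$. With $\mathfrak{z}$ the center, $\mathfrak{v} = \mathfrak{z}^\perp$, and $J$ defined as usual, one has $J_{\alpha z}(\beta u) = \alpha \bar{\beta}\, J_z u$ for all $\alpha, \beta \in \mathbb{C}$, $z \in \mathfrak{z}$, and $u \in \mathfrak{v}$; that is, $J_z u$ is complex linear in $z$ and conjugate linear in $u$. -/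
open scoped RealInnerProductSpace ComplexConjugate

attribute [local instance high] NormedAddCommGroup.toAddCommGroup

/-!
Hermitian invariance makes multiplication by `i` skew-adjoint for the real inner product, so
multiplication by `a ∈ ℂ` has adjoint multiplication by `ā`; in particular `𝔳 = 𝔷ᗮ` is a complex
subspace. Testing `J (α • z) (β • u)` and `(α * β̄) • J z u` against `v ∈ 𝔳`, both pairings become
`⟪z, (ᾱ * β) • ⁅u, v⁆⟫`, and two vectors of `𝔳` with the same pairings against `𝔳` coincide.
-/

theorem lie_smul_of_smul_lie {R L : Type*} [LieRing L] [SMul R L]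
    (hbil : ∀ (a : R) (x y : L), ⁅a • x, y⁆ = a • ⁅x, y⁆) (a : R) (x y : L) :
    ⁅x, a • y⁆ = a • ⁅x, y⁆ := by
  -- The sign is moved inside the bracket, so `•` never has to commute with negation.
  rw [← lie_skew x (a • y), ← lie_neg, hbil, lie_neg, lie_skew]

theorem eq_of_forall_real_inner_eq_of_mem {E : Type*} [NormedAddCommGroup E]
    [InnerProductSpace ℝ E] (K : Submodule ℝ E) {x y : E} (hx : x ∈ K) (hy : y ∈ K)
    (h : ∀ v ∈ K, ⟪x, v⟫ = ⟪y, v⟫) : x = y := by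
  rw [← sub_eq_zero, ← inner_self_eq_zero (𝕜 := ℝ), inner_sub_left, h _ (K.sub_mem hx hy), sub_self]

theorem complex_smul_eq_re_smul_add_im_smul_I_smul {M : Type*} [AddCommGroup M] [Module ℂ M]
    [Module ℝ M] [IsScalarTower ℝ ℂ M] (a : ℂ) (x : M) :
    a • x = a.re • x + a.im • (Complex.I • x) := by
  rw [← algebraMap_smul ℂ a.re, ← algebraMap_smul ℂ a.im, smul_smul, ← add_smul]
  simp

section Hermitian

variable {G : Type*} [NormedAddCommGroup G] [InnerProductSpace ℝ G] [Module ℂ G]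

theorem real_inner_I_smul_left
    (hherm : ∀ x y : G, ⟪Complex.I • x, Complex.I • y⟫ = ⟪x, y⟫) (x y : G) :
    ⟪Complex.I • x, y⟫ = -⟪x, Complex.I • y⟫ := by
  have h := hherm x (Complex.I • y)
  rw [smul_smul, Complex.I_mul_I, neg_one_smul, inner_neg_right] at h
  linarith

theorem real_inner_complex_smul_left [IsScalarTower ℝ ℂ G]
    (hherm : ∀ x y : G, ⟪Complex.I • x, Complex.I • y⟫ = ⟪x, y⟫) (a : ℂ) (x y : G) :
    ⟪a • x, y⟫ = ⟪x, conj a • y⟫ := by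
  rw [complex_smul_eq_re_smul_add_im_smul_I_smul a x,
    complex_smul_eq_re_smul_add_im_smul_I_smul (conj a) y, inner_add_left, inner_add_right,
    real_inner_smul_left, real_inner_smul_left, real_inner_smul_right, real_inner_smul_right,
    real_inner_I_smul_left hherm, Complex.conj_re, Complex.conj_im]
  ring

theorem Submodule.complex_smul_mem_orthogonal_restrictScalars [IsScalarTower ℝ ℂ G]
    (hherm : ∀ x y : G, ⟪Complex.I • x, Complex.I • y⟫ = ⟪x, y⟫) (K : Submodule ℂ G)
    (c : ℂ) {v : G} (hv : v ∈ (K.restrictScalars ℝ)ᗮ) : c • v ∈ (K.restrictScalars ℝ)ᗮ := by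
  rw [Submodule.mem_orthogonal'] at hv ⊢
  intro w hw
  rw [real_inner_complex_smul_left hherm]
  exact hv _ (K.smul_mem _ hw)

end Hermitian

theorem J_complex_linear_conjugate_linear_general
    {G : Type*} [LieRing G]
    [NormedAddCommGroup G] [InnerProductSpace ℝ G]
    [Module ℂ G] [IsScalarTower ℝ ℂ G]
    (hbil : ∀ (a : ℂ) (x y : G), ⁅a • x, y⁆ = a • ⁅x, y⁆)
    (hherm : ∀ x y : G, ⟪(Complex.I : ℂ) • x, (Complex.I : ℂ) • y⟫ = ⟪x, y⟫)
    (𝔷 : Submodule ℂ G)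
    (J : G → G → G)
    (hJmem : ∀ z ∈ 𝔷, ∀ u ∈ (𝔷.restrictScalars ℝ)ᗮ, J z u ∈ (𝔷.restrictScalars ℝ)ᗮ)
    (hJdef : ∀ z ∈ 𝔷, ∀ u ∈ (𝔷.restrictScalars ℝ)ᗮ, ∀ v ∈ (𝔷.restrictScalars ℝ)ᗮ,
      ⟪J z u, v⟫ = ⟪z, ⁅u, v⁆⟫) :
    ∀ (α β : ℂ), ∀ z ∈ 𝔷, ∀ u ∈ (𝔷.restrictScalars ℝ)ᗮ,
      J (α • z) (β • u) = (α * (starRingEnd ℂ) β) • J z u := by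
  intro α β z hz u hu
  have smul_mem_𝔳 := Submodule.complex_smul_mem_orthogonal_restrictScalars hherm 𝔷
  have hαz : α • z ∈ 𝔷 := 𝔷.smul_mem α hz
  have hβu := smul_mem_𝔳 β hu
  refine eq_of_forall_real_inner_eq_of_mem _ (hJmem _ hαz _ hβu)
    (smul_mem_𝔳 _ (hJmem z hz u hu)) fun v hv => ?_
  calc ⟪J (α • z) (β • u), v⟫ = ⟪α • z, ⁅β • u, v⁆⟫ := hJdef _ hαz _ hβu v hv
    _ = ⟪z, (conj α * β) • ⁅u, v⁆⟫ := by
      rw [hbil, real_inner_complex_smul_left hherm, smul_smul]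
    _ = ⟪J z u, (conj α * β) • v⟫ := by
      rw [hJdef z hz u hu _ (smul_mem_𝔳 _ hv), lie_smul_of_smul_lie hbil]
    _ = ⟪(α * conj β) • J z u, v⟫ := by
      rw [real_inner_complex_smul_left hherm, map_mul, Complex.conj_conj]

/-- Let `G` be a finite-dimensional complex Lie algebra with a Hermitian real
inner product (`⟪i•x, i•y⟫ = ⟪x, y⟫`), `𝔷` its center, `𝔳 = 𝔷ᗮ`, and `J`
defined by `⟪J z u, v⟫ = ⟪z, ⁅u,v⁆⟫` for `v ∈ 𝔳`.  Then
`J (α•z) (β•u) = (α * β̄) • J z u`: `J z u` is complex linear in `z` and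
conjugate linear in `u`. -/
theorem J_complex_linear_conjugate_linear
    {G : Type*} [LieRing G]
    [NormedAddCommGroup G] [InnerProductSpace ℝ G]
    [Module ℂ G] [IsScalarTower ℝ ℂ G] [FiniteDimensional ℂ G]
    (hbil : ∀ (a : ℂ) (x y : G), ⁅a • x, y⁆ = a • ⁅x, y⁆)
    (hherm : ∀ x y : G, ⟪(Complex.I : ℂ) • x, (Complex.I : ℂ) • y⟫ = ⟪x, y⟫)
    (𝔷 : Submodule ℂ G) (h𝔷 : ∀ x : G, x ∈ 𝔷 ↔ ∀ y : G, ⁅x, y⁆ = 0)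
    (J : G → G → G)
    (hJmem : ∀ z ∈ 𝔷, ∀ u ∈ (𝔷.restrictScalars ℝ)ᗮ, J z u ∈ (𝔷.restrictScalars ℝ)ᗮ)
    (hJdef : ∀ z ∈ 𝔷, ∀ u ∈ (𝔷.restrictScalars ℝ)ᗮ, ∀ v ∈ (𝔷.restrictScalars ℝ)ᗮ,
      ⟪J z u, v⟫ = ⟪z, ⁅u, v⁆⟫) :
    ∀ (α β : ℂ), ∀ z ∈ 𝔷, ∀ u ∈ (𝔷.restrictScalars ℝ)ᗮ,
      J (α • z) (β • u) = (α * (starRingEnd ℂ) β) • J z u :=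
  J_complex_linear_conjugate_linear_general hbil hherm 𝔷 J hJmem hJdef
end

section
/- Let $(\mathfrak{g}, \langle\cdot,\cdot\rangle)$ be a complex H-type Lie algebra that is not abelian (i.e., its center $\mathfrak{z}$ is a proper subspace of $\mathfrak{g}$). Then the center $\mathfrak{z}$ has complex dimension exactly 1. -/
/-!
For a unit central `z`, `J z` is a skew-adjoint isometry of `𝔳 = 𝔷ᗮ`, and polarizing
`‖J z u‖ = ‖z‖ ‖u‖` in `z` gives the Clifford relation `J w J z = -J z J w` for orthonormal `z, w`.
Complex bilinearity of the bracket and hermitianity of the inner product give `J (i z) = i J z`,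
so `J w` is `ℂ`-antilinear. If `dim_ℂ 𝔷 ≥ 2`, take `w` orthonormal to both `z` and `i z`: then
`J w` anticommutes with `J z` and with `i J z`, which forces `J z J w = 0`, impossible on `𝔳 ≠ 0`.
Finally `𝔷 ≠ 0`, as otherwise all brackets vanish and `𝔷` would be everything.
-/

open scoped RealInnerProductSpace

attribute [local instance 2000] NormedAddCommGroup.toAddCommGroup

-- `G` carries two unrelated additive structures, from `LieRing` and from `NormedAddCommGroup`;
-- `+` and `0` denote the latter, and the bracket is additive only for the former.
set_option linter.overlappingInstances false

open Complex (I)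

section InnerProduct

variable {E F : Type*} [NormedAddCommGroup E] [InnerProductSpace ℝ E]
  [NormedAddCommGroup F] [InnerProductSpace ℝ F]

theorem Submodule.exists_mem_norm_eq_one {K : Submodule ℝ E} (hK : K ≠ ⊥) :
    ∃ x ∈ K, ‖x‖ = 1 := by
  obtain ⟨x, hx, hx0⟩ := K.exists_mem_ne_zero_of_ne_bot hK
  exact ⟨(‖x‖⁻¹ : ℝ) • x, K.smul_mem _ hx, norm_smul_inv_norm hx0⟩

theorem Submodule.eq_of_forall_inner_eq {V : Submodule ℝ E} {a b : E} (ha : a ∈ V) (hb : b ∈ V)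
    (h : ∀ v ∈ V, ⟪a, v⟫ = ⟪b, v⟫) : a = b := by
  rw [← sub_eq_zero, ← inner_self_eq_zero (𝕜 := ℝ), inner_sub_left, h _ (sub_mem ha hb), sub_self]

theorem map_add_of_inner_map_map {V : Submodule ℝ E} {f : E → F}
    (hf : ∀ u ∈ V, ∀ v ∈ V, ⟪f u, f v⟫ = ⟪u, v⟫) {u v : E} (hu : u ∈ V) (hv : v ∈ V) :
    f (u + v) = f u + f v := by
  have huv := add_mem hu hv
  have e₁ := hf _ huv _ huv
  have e₂ := hf _ huv _ hu
  have e₃ := hf _ huv _ hv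
  have e₄ := hf _ hu _ hu
  have e₅ := hf _ hu _ hv
  have e₆ := hf _ hv _ hv
  rw [← sub_eq_zero, ← inner_self_eq_zero (𝕜 := ℝ)]
  simp only [inner_sub_left, inner_sub_right, inner_add_left, inner_add_right, real_inner_comm]
    at e₁ e₂ e₃ e₄ e₅ e₆ ⊢
  linarith

end InnerProduct

section ComplexStructure

variable {G : Type*} [NormedAddCommGroup G] [InnerProductSpace ℝ G] [Module ℂ G]

theorem inner_I_smul_left (hherm : ∀ x y : G, ⟪I • x, I • y⟫ = ⟪x, y⟫) (x y : G) :
    ⟪I • x, y⟫ = -⟪x, I • y⟫ := by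
  rw [← hherm x, smul_smul, Complex.I_mul_I, neg_one_smul, inner_neg_right, neg_neg]

theorem norm_I_smul (hherm : ∀ x y : G, ⟪I • x, I • y⟫ = ⟪x, y⟫) (x : G) : ‖I • x‖ = ‖x‖ := by
  rw [norm_eq_sqrt_real_inner, norm_eq_sqrt_real_inner, hherm]

theorem I_smul_mem_orthogonal [IsScalarTower ℝ ℂ G]
    (hherm : ∀ x y : G, ⟪I • x, I • y⟫ = ⟪x, y⟫) (W : Submodule ℂ G) {v : G}
    (hv : v ∈ (W.restrictScalars ℝ)ᗮ) : I • v ∈ (W.restrictScalars ℝ)ᗮ := by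
  intro x hx
  rw [real_inner_comm, inner_I_smul_left hherm, real_inner_comm, hv _ (W.smul_mem I hx), neg_zero]

theorem exists_mem_norm_eq_one_inner_eq_zero [IsScalarTower ℝ ℂ G] [FiniteDimensional ℝ G]
    {W : Submodule ℂ G} (hW : 2 ≤ Module.finrank ℂ W) {x : G} (hx : x ∈ W) :
    ∃ w ∈ W, ‖w‖ = 1 ∧ ⟪x, w⟫ = 0 ∧ ⟪I • x, w⟫ = 0 := by
  set K := Submodule.span ℝ {x, I • x}
  have hKW : K ≤ W.restrictScalars ℝ := Submodule.span_le.2 <| by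
    simp [Set.insert_subset_iff, hx, W.smul_mem I hx]
  have hK : Module.finrank ℝ K ≤ 2 := by
    classical
    have := finrank_span_finset_le_card (R := ℝ) ({x, I • x} : Finset G)
    rw [Finset.coe_insert, Finset.coe_singleton] at this
    exact this.trans Finset.card_le_two
  have hWℝ : Module.finrank ℝ (W.restrictScalars ℝ) = 2 * Module.finrank ℂ W := by
    rw [← Complex.finrank_real_complex]
    exact (Module.finrank_mul_finrank ℝ ℂ W).symm
  have := Submodule.finrank_add_inf_finrank_orthogonal hKW
  obtain ⟨w, hw, hw1⟩ := Submodule.exists_mem_norm_eq_one (K := Kᗮ ⊓ W.restrictScalars ℝ) <| by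
    intro h
    rw [h, finrank_bot] at this
    omega
  obtain ⟨hwK, hwW⟩ := Submodule.mem_inf.1 hw
  exact ⟨w, hwW, hw1, hwK _ (Submodule.subset_span (by simp)),
    hwK _ (Submodule.subset_span (by simp))⟩

end ComplexStructure

section HType

variable {G : Type*} [LieRing G] [NormedAddCommGroup G] [Module ℂ G]

theorem lie_self_eq_zero_of_lie_smul (hbil : ∀ (a : ℂ) (x y : G), ⁅a • x, y⁆ = a • ⁅x, y⁆)
    (x : G) : ⁅x, x⁆ = 0 := by
  have h := hbil 0 0 0
  rw [zero_smul, zero_smul] at h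
  rw [← h, lie_self, lie_self]

variable [InnerProductSpace ℝ G] [IsScalarTower ℝ ℂ G] {𝔷 : Submodule ℂ G}

local notation "𝔳" => (𝔷.restrictScalars ℝ)ᗮ

variable (𝔷) in
structure IsHTypeJ (J : G → G → G) : Prop where
  mapsTo : ∀ z ∈ 𝔷, ∀ u ∈ 𝔳, J z u ∈ 𝔳
  inner_apply : ∀ z ∈ 𝔷, ∀ u ∈ 𝔳, ∀ v ∈ 𝔳, ⟪J z u, v⟫ = ⟪z, ⁅u, v⁆⟫
  inner_apply_apply : ∀ z ∈ 𝔷, ‖z‖ = 1 → ∀ u ∈ 𝔳, ∀ v ∈ 𝔳, ⟪J z u, J z v⟫ = ⟪u, v⟫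

namespace IsHTypeJ

variable {J : G → G → G} {z w u v : G}

theorem inner_apply_self (hJ : IsHTypeJ 𝔷 J) (hbil : ∀ (a : ℂ) (x y : G), ⁅a • x, y⁆ = a • ⁅x, y⁆)
    (hz : z ∈ 𝔷) (hu : u ∈ 𝔳) : ⟪J z u, u⟫ = 0 := by
  rw [hJ.inner_apply z hz u hu u hu, lie_self_eq_zero_of_lie_smul hbil, inner_zero_right]

theorem map_add_left (hJ : IsHTypeJ 𝔷 J) (hz : z ∈ 𝔷) (hw : w ∈ 𝔷) (hu : u ∈ 𝔳) :
    J (z + w) u = J z u + J w u := by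
  refine Submodule.eq_of_forall_inner_eq (hJ.mapsTo _ (add_mem hz hw) u hu)
    (add_mem (hJ.mapsTo z hz u hu) (hJ.mapsTo w hw u hu)) fun v hv => ?_
  rw [hJ.inner_apply _ (add_mem hz hw) u hu v hv, inner_add_left, inner_add_left,
    hJ.inner_apply z hz u hu v hv, hJ.inner_apply w hw u hu v hv]

theorem map_smul_left (hJ : IsHTypeJ 𝔷 J) (r : ℝ) (hz : z ∈ 𝔷) (hu : u ∈ 𝔳) :
    J (r • z) u = r • J z u := by
  have hrz : r • z ∈ 𝔷 := 𝔷.smul_of_tower_mem r hz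
  refine Submodule.eq_of_forall_inner_eq (hJ.mapsTo _ hrz u hu)
    (Submodule.smul_mem _ r (hJ.mapsTo z hz u hu)) fun v hv => ?_
  rw [hJ.inner_apply _ hrz u hu v hv, real_inner_smul_left, real_inner_smul_left,
    hJ.inner_apply z hz u hu v hv]

theorem map_add_right (hJ : IsHTypeJ 𝔷 J) (hz : z ∈ 𝔷) (hz1 : ‖z‖ = 1) (hu : u ∈ 𝔳)
    (hv : v ∈ 𝔳) : J z (u + v) = J z u + J z v :=
  map_add_of_inner_map_map (hJ.inner_apply_apply z hz hz1) hu hv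

theorem norm_apply (hJ : IsHTypeJ 𝔷 J) (hz : z ∈ 𝔷) (hz1 : ‖z‖ = 1) (hu : u ∈ 𝔳) :
    ‖J z u‖ = ‖u‖ := by
  rw [norm_eq_sqrt_real_inner, norm_eq_sqrt_real_inner, hJ.inner_apply_apply z hz hz1 u hu u hu]

-- Skew-symmetry cannot come from that of the bracket; it comes from `⟪J z x, x⟫ = 0` and
-- additivity of the isometry `J z`.
theorem inner_apply_eq_neg (hJ : IsHTypeJ 𝔷 J)
    (hbil : ∀ (a : ℂ) (x y : G), ⁅a • x, y⁆ = a • ⁅x, y⁆) (hz : z ∈ 𝔷) (hz1 : ‖z‖ = 1)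
    (hu : u ∈ 𝔳) (hv : v ∈ 𝔳) : ⟪J z u, v⟫ = -⟪J z v, u⟫ := by
  have h := hJ.inner_apply_self hbil hz (add_mem hu hv)
  rw [hJ.map_add_right hz hz1 hu hv, inner_add_left, inner_add_right, inner_add_right,
    hJ.inner_apply_self hbil hz hu, hJ.inner_apply_self hbil hz hv] at h
  linarith

theorem map_I_smul_right_eq_neg_map_I_smul_left (hJ : IsHTypeJ 𝔷 J)
    (hbil : ∀ (a : ℂ) (x y : G), ⁅a • x, y⁆ = a • ⁅x, y⁆)
    (hherm : ∀ x y : G, ⟪I • x, I • y⟫ = ⟪x, y⟫) (hz : z ∈ 𝔷) (hu : u ∈ 𝔳) :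
    J z (I • u) = -J (I • z) u := by
  have hIu := I_smul_mem_orthogonal hherm 𝔷 hu
  have hIz := 𝔷.smul_mem I hz
  refine Submodule.eq_of_forall_inner_eq (hJ.mapsTo z hz _ hIu)
    (neg_mem (hJ.mapsTo _ hIz u hu)) fun v hv => ?_
  rw [hJ.inner_apply z hz _ hIu v hv, hbil, inner_neg_left, hJ.inner_apply _ hIz u hu v hv,
    inner_I_smul_left hherm, neg_neg, real_inner_comm]

theorem map_I_smul_left (hJ : IsHTypeJ 𝔷 J)
    (hbil : ∀ (a : ℂ) (x y : G), ⁅a • x, y⁆ = a • ⁅x, y⁆)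
    (hherm : ∀ x y : G, ⟪I • x, I • y⟫ = ⟪x, y⟫) (hz : z ∈ 𝔷) (hz1 : ‖z‖ = 1) (hu : u ∈ 𝔳) :
    J (I • z) u = I • J z u := by
  have hIz := 𝔷.smul_mem I hz
  have hIz1 : ‖I • z‖ = 1 := by rw [norm_I_smul hherm, hz1]
  refine Submodule.eq_of_forall_inner_eq (hJ.mapsTo _ hIz u hu)
    (I_smul_mem_orthogonal hherm 𝔷 (hJ.mapsTo z hz u hu)) fun v hv => ?_
  have hIv := I_smul_mem_orthogonal hherm 𝔷 hv
  rw [hJ.inner_apply_eq_neg hbil hIz hIz1 hu hv, ← neg_neg (J (I • z) v),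
    ← hJ.map_I_smul_right_eq_neg_map_I_smul_left hbil hherm hz hv, inner_neg_left, neg_neg,
    hJ.inner_apply_eq_neg hbil hz hz1 hIv hu, inner_I_smul_left hherm]

theorem map_I_smul_right (hJ : IsHTypeJ 𝔷 J)
    (hbil : ∀ (a : ℂ) (x y : G), ⁅a • x, y⁆ = a • ⁅x, y⁆)
    (hherm : ∀ x y : G, ⟪I • x, I • y⟫ = ⟪x, y⟫) (hz : z ∈ 𝔷) (hz1 : ‖z‖ = 1) (hu : u ∈ 𝔳) :
    J z (I • u) = -(I • J z u) := by
  rw [hJ.map_I_smul_right_eq_neg_map_I_smul_left hbil hherm hz hu,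
    hJ.map_I_smul_left hbil hherm hz hz1 hu]

theorem inner_apply_apply_eq_norm_sq_mul (hJ : IsHTypeJ 𝔷 J) (hz : z ∈ 𝔷) (hu : u ∈ 𝔳)
    (hv : v ∈ 𝔳) : ⟪J z u, J z v⟫ = ‖z‖ ^ 2 * ⟪u, v⟫ := by
  rcases eq_or_ne z 0 with rfl | hz0
  · have h := hJ.map_smul_left 0 (zero_mem 𝔷) hu
    rw [zero_smul, zero_smul] at h
    rw [h, inner_zero_left, norm_zero]
    ring
  · have hz' : ‖z‖⁻¹ • z ∈ 𝔷 := 𝔷.smul_of_tower_mem _ hz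
    have hJz : ∀ x ∈ 𝔳, J z x = ‖z‖ • J (‖z‖⁻¹ • z) x := fun x hx => by
      rw [← hJ.map_smul_left _ hz' hx, smul_inv_smul₀ (norm_ne_zero_iff.2 hz0)]
    rw [hJz u hu, hJz v hv, real_inner_smul_left, real_inner_smul_right,
      hJ.inner_apply_apply _ hz' (norm_smul_inv_norm hz0) u hu v hv]
    ring

theorem inner_apply_apply_add_inner_apply_apply (hJ : IsHTypeJ 𝔷 J) (hz : z ∈ 𝔷) (hw : w ∈ 𝔷)
    (hu : u ∈ 𝔳) (hv : v ∈ 𝔳) :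
    ⟪J z u, J w v⟫ + ⟪J w u, J z v⟫ = 2 * ⟪z, w⟫ * ⟪u, v⟫ := by
  have h := hJ.inner_apply_apply_eq_norm_sq_mul (add_mem hz hw) hu hv
  rw [hJ.map_add_left hz hw hu, hJ.map_add_left hz hw hv, inner_add_left, inner_add_right,
    inner_add_right, hJ.inner_apply_apply_eq_norm_sq_mul hz hu hv,
    hJ.inner_apply_apply_eq_norm_sq_mul hw hu hv, norm_add_sq_real] at h
  linear_combination h

theorem apply_apply_eq_neg_apply_apply (hJ : IsHTypeJ 𝔷 J)
    (hbil : ∀ (a : ℂ) (x y : G), ⁅a • x, y⁆ = a • ⁅x, y⁆) (hz : z ∈ 𝔷) (hz1 : ‖z‖ = 1)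
    (hw : w ∈ 𝔷) (hw1 : ‖w‖ = 1) (hzw : ⟪z, w⟫ = 0) (hu : u ∈ 𝔳) :
    J w (J z u) = -J z (J w u) := by
  have hzu := hJ.mapsTo z hz u hu
  have hwu := hJ.mapsTo w hw u hu
  refine Submodule.eq_of_forall_inner_eq (hJ.mapsTo w hw _ hzu)
    (neg_mem (hJ.mapsTo z hz _ hwu)) fun v hv => ?_
  have h := hJ.inner_apply_apply_add_inner_apply_apply hz hw hu hv
  rw [hzw, mul_zero, zero_mul] at h
  rw [inner_neg_left, hJ.inner_apply_eq_neg hbil hw hw1 hzu hv,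
    hJ.inner_apply_eq_neg hbil hz hz1 hwu hv, real_inner_comm, real_inner_comm (J w u)]
  linarith

theorem finrank_le_one [FiniteDimensional ℝ G] (hJ : IsHTypeJ 𝔷 J)
    (hbil : ∀ (a : ℂ) (x y : G), ⁅a • x, y⁆ = a • ⁅x, y⁆)
    (hherm : ∀ x y : G, ⟪I • x, I • y⟫ = ⟪x, y⟫) (hu : u ∈ 𝔳) (hu0 : u ≠ 0) :
    Module.finrank ℂ 𝔷 ≤ 1 := by
  by_contra! h𝔷
  obtain ⟨z, hz, hz1⟩ := Submodule.exists_mem_norm_eq_one (K := 𝔷.restrictScalars ℝ) <| by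
    intro h
    rw [Submodule.restrictScalars_eq_bot_iff] at h
    subst h
    simp at h𝔷
  obtain ⟨w, hw, hw1, hzw, hIzw⟩ := exists_mem_norm_eq_one_inner_eq_zero h𝔷 hz
  have hIz := 𝔷.smul_mem I hz
  have hIz1 : ‖I • z‖ = 1 := by rw [norm_I_smul hherm, hz1]
  have hzu := hJ.mapsTo z hz u hu
  have hwu := hJ.mapsTo w hw u hu
  have key := hJ.apply_apply_eq_neg_apply_apply hbil hIz hIz1 hw hw1 hIzw hu
  rw [hJ.map_I_smul_left hbil hherm hz hz1 hu, hJ.map_I_smul_left hbil hherm hz hz1 hwu,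
    hJ.map_I_smul_right hbil hherm hw hw1 hzu,
    hJ.apply_apply_eq_neg_apply_apply hbil hz hz1 hw hw1 hzw hu, smul_neg, neg_neg,
    eq_neg_iff_add_eq_zero, ← two_smul ℝ, smul_eq_zero_iff_right two_ne_zero,
    smul_eq_zero_iff_right Complex.I_ne_zero] at key
  apply hu0
  rw [← norm_eq_zero, ← hJ.norm_apply hw hw1 hu, ← hJ.norm_apply hz hz1 hwu, key, norm_zero]

end IsHTypeJ

theorem center_ne_bot (h𝔷 : ∀ x : G, x ∈ 𝔷 ↔ ∀ y : G, ⁅x, y⁆ = 0)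
    (h1 : ∀ u ∈ 𝔳, ∀ v ∈ 𝔳, ⁅u, v⁆ ∈ 𝔷) (hproper : 𝔷 ≠ ⊤) : 𝔷 ≠ ⊥ := by
  rintro rfl
  refine hproper (eq_top_iff.2 fun x _ => (h𝔷 x).2 fun y => ?_)
  simpa using h1 x (by simp) y (by simp)

end HType

/-- The center of a non-abelian complex H-type Lie algebra has complex
dimension exactly 1. -/
theorem center_complex_dim_one_of_complex_Htype
    {G : Type*} [LieRing G]
    [NormedAddCommGroup G] [InnerProductSpace ℝ G]
    [Module ℂ G] [IsScalarTower ℝ ℂ G] [FiniteDimensional ℂ G]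
    (hbil : ∀ (a : ℂ) (x y : G), ⁅a • x, y⁆ = a • ⁅x, y⁆)
    (hherm : ∀ x y : G, ⟪(Complex.I : ℂ) • x, (Complex.I : ℂ) • y⟫ = ⟪x, y⟫)
    (𝔷 : Submodule ℂ G) (h𝔷 : ∀ x : G, x ∈ 𝔷 ↔ ∀ y : G, ⁅x, y⁆ = 0)
    (J : G → G → G)
    (hJmem : ∀ z ∈ 𝔷, ∀ u ∈ (𝔷.restrictScalars ℝ)ᗮ, J z u ∈ (𝔷.restrictScalars ℝ)ᗮ)
    (hJdef : ∀ z ∈ 𝔷, ∀ u ∈ (𝔷.restrictScalars ℝ)ᗮ, ∀ v ∈ (𝔷.restrictScalars ℝ)ᗮ,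
      ⟪J z u, v⟫ = ⟪z, ⁅u, v⁆⟫)
    (h1 : ∀ u ∈ (𝔷.restrictScalars ℝ)ᗮ, ∀ v ∈ (𝔷.restrictScalars ℝ)ᗮ, ⁅u, v⁆ ∈ 𝔷)
    (h2 : ∀ z ∈ 𝔷, ‖z‖ = 1 → ∀ u ∈ (𝔷.restrictScalars ℝ)ᗮ, ∀ v ∈ (𝔷.restrictScalars ℝ)ᗮ,
      ⟪J z u, J z v⟫ = ⟪u, v⟫)
    -- non-abelian: the center is a proper subspace of `G`
    (hproper : 𝔷 ≠ ⊤) :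
    Module.finrank ℂ 𝔷 = 1 := by
  have : FiniteDimensional ℝ G := Module.Finite.trans ℂ G
  have hJ : IsHTypeJ 𝔷 J := ⟨hJmem, hJdef, h2⟩
  obtain ⟨u, hu, hu0⟩ := (𝔷.restrictScalars ℝ)ᗮ.exists_mem_ne_zero_of_ne_bot <| by
    rwa [Ne, Submodule.orthogonal_eq_bot_iff, Submodule.restrictScalars_eq_top_iff ℝ ℂ G]
  exact le_antisymm (hJ.finrank_le_one hbil hherm hu hu0)
    (Submodule.one_le_finrank_iff.2 (center_ne_bot h𝔷 h1 hproper))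
end
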